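/- Let ω denote the clique number. Given a graph G, form H by adding two new vertices u and v, each adjacent to every vertex of G (but not to each other). Then F_ω(H) = F_ω(G) + 1, where F_ω(G) is the minimum size of a set of vertices contained in a unique maximum clique of G. -/

import Mathlib

open SimpleGraph

/-- The forcing clique number: minimum size of a set of vertices contained in a
unique maximum clique. -/
noncomputable def Fomega {V : Type*} [Fintype V] (G : SimpleGraph V) : ℕ :=
  sInf {k | ∃ S : Finset V, S.card = k ∧
    ∃! M : Finset V, (G.IsClique (M : Set V) ∧ M.card = G.cliqueNum) ∧ S ⊆ M}

/-- Add two new vertices `u, v`, each adjacent to every vertex of `G` but not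
to each other. -/
def addTwo {V : Type*} (G : SimpleGraph V) : SimpleGraph (V ⊕ Fin 2) where
  Adj x y :=
    match x, y with
    | .inl u, .inl v => G.Adj u v
    | .inl _, .inr _ => True
    | .inr _, .inl _ => True
    | .inr _, .inr _ => False
  symm := by
    constructor
    rintro (u | a) (v | b) h <;> simp_all <;> exact h.symm
  loopless := by
    constructor
    rintro (u | a) h <;> simp_all

/-!
The maximum cliques of `addTwo G` are exactly `N ∪ {w}` with `N` a maximum clique of `G` and
`w` one of the two new vertices. Hence a forcing set `S` of `G` gives the forcing set `S ∪ {u}`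
of `addTwo G`. Conversely, a forcing set `T` of `addTwo G` must contain `u` or `v`, since
otherwise the clique it forces could have its new vertex swapped for the other one; and the
old vertices of `T` form a forcing set of `G`.
-/

open Finset

section

variable {V : Type*}

namespace SimpleGraph

def IsForcingSet (G : SimpleGraph V) (S : Finset V) : Prop :=
  ∃! M : Finset V, G.IsNClique G.cliqueNum M ∧ S ⊆ M

lemma isForcingSet_of_isNClique_cliqueNum {G : SimpleGraph V} {M : Finset V}
    (hM : G.IsNClique G.cliqueNum M) : G.IsForcingSet M :=
  ⟨M, ⟨hM, subset_rfl⟩, fun _ ⟨hN, hMN⟩ =>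
    (eq_of_subset_of_card_le hMN (by rw [hN.card_eq, hM.card_eq])).symm⟩

end SimpleGraph

lemma Fomega_eq_sInf [Fintype V] (G : SimpleGraph V) :
    Fomega G = sInf {k | ∃ S : Finset V, #S = k ∧ G.IsForcingSet S} := by
  simp only [Fomega, IsForcingSet, isNClique_iff]

lemma Fomega_le_card [Fintype V] {G : SimpleGraph V} {S : Finset V} (hS : G.IsForcingSet S) :
    Fomega G ≤ #S := by
  rw [Fomega_eq_sInf]
  exact Nat.sInf_le ⟨S, rfl, hS⟩

lemma exists_isForcingSet_card_eq_Fomega [Fintype V] (G : SimpleGraph V) :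
    ∃ S : Finset V, G.IsForcingSet S ∧ #S = Fomega G := by
  obtain ⟨M, hM⟩ := G.exists_isNClique_cliqueNum
  rw [Fomega_eq_sInf]
  obtain ⟨S, hcard, hS⟩ := Nat.sInf_mem (s := {k | ∃ S : Finset V, #S = k ∧ G.IsForcingSet S})
    ⟨_, M, rfl, isForcingSet_of_isNClique_cliqueNum hM⟩
  exact ⟨S, hS, hcard⟩

section addTwo

variable {G : SimpleGraph V}

lemma isClique_addTwo_iff {M : Finset (V ⊕ Fin 2)} :
    (addTwo G).IsClique (M : Set (V ⊕ Fin 2)) ↔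
      G.IsClique (M.toLeft : Set V) ∧ #M.toRight ≤ 1 := by
  constructor
  · intro h
    refine ⟨fun a ha b hb hab => h (mem_toLeft.1 ha) (mem_toLeft.1 hb) (by simpa using hab),
      card_le_one.2 fun i hi j hj => ?_⟩
    by_contra hij
    exact h (mem_toRight.1 hi) (mem_toRight.1 hj) (by simpa using hij)
  · rintro ⟨hL, hR⟩ (a | i) ha (b | j) hb hab
    · exact hL (by simpa using ha) (by simpa using hb) (by simpa using hab)
    · trivial
    · trivial
    · exact hab (by rw [card_le_one.1 hR i (by simpa) j (by simpa)])

variable [Finite V]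

lemma cliqueNum_addTwo (G : SimpleGraph V) : (addTwo G).cliqueNum = G.cliqueNum + 1 := by
  obtain ⟨M, hM⟩ := (addTwo G).exists_isNClique_cliqueNum
  obtain ⟨N, hN⟩ := G.exists_isNClique_cliqueNum
  refine le_antisymm ?_ ?_
  · have hMc := isClique_addTwo_iff.1 hM.isClique
    rw [← hM.card_eq, ← card_toLeft_add_card_toRight]
    exact add_le_add hMc.1.card_le_cliqueNum hMc.2
  · have hNc := (isClique_addTwo_iff (G := G) (M := N.disjSum {0})).2 (by simpa using hN.isClique)
    simpa [hN.card_eq] using hNc.card_le_cliqueNum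

lemma isNClique_cliqueNum_addTwo_iff {M : Finset (V ⊕ Fin 2)} :
    (addTwo G).IsNClique (addTwo G).cliqueNum M ↔
      G.IsNClique G.cliqueNum M.toLeft ∧ #M.toRight = 1 := by
  simp only [isNClique_iff, isClique_addTwo_iff, cliqueNum_addTwo, ← card_toLeft_add_card_toRight]
  constructor
  · rintro ⟨⟨hL, hR⟩, hcard⟩
    have := hL.card_le_cliqueNum
    exact ⟨⟨hL, by omega⟩, by omega⟩
  · rintro ⟨⟨hL, hcard⟩, hR⟩
    exact ⟨⟨hL, hR.le⟩, by omega⟩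

lemma isNClique_cliqueNum_addTwo_disjSum_iff {N : Finset V} {i : Fin 2} :
    (addTwo G).IsNClique (addTwo G).cliqueNum (N.disjSum {i}) ↔ G.IsNClique G.cliqueNum N := by
  simp [isNClique_cliqueNum_addTwo_iff]

lemma SimpleGraph.IsForcingSet.disjSum_addTwo {S : Finset V} (hS : G.IsForcingSet S)
    (i : Fin 2) : (addTwo G).IsForcingSet (S.disjSum {i}) := by
  obtain ⟨M, ⟨hM, hSM⟩, huniq⟩ := hS
  refine ⟨M.disjSum {i}, ⟨isNClique_cliqueNum_addTwo_disjSum_iff.2 hM,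
    disjSum_mono hSM subset_rfl⟩, fun K ⟨hK, hSK⟩ => ?_⟩
  obtain ⟨hKL, hKR⟩ := isNClique_cliqueNum_addTwo_iff.1 hK
  rw [disjSum_subset] at hSK
  exact eq_disjSum_iff.2
    ⟨huniq _ ⟨hKL, hSK.1⟩, (eq_of_subset_of_card_le hSK.2 (by simp [hKR])).symm⟩

lemma SimpleGraph.IsForcingSet.toLeft_of_addTwo {T : Finset (V ⊕ Fin 2)}
    (hT : (addTwo G).IsForcingSet T) : G.IsForcingSet T.toLeft := by
  obtain ⟨M, ⟨hM, hTM⟩, huniq⟩ := hT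
  obtain ⟨hML, hMR⟩ := isNClique_cliqueNum_addTwo_iff.1 hM
  refine ⟨M.toLeft, ⟨hML, toLeft_subset_toLeft hTM⟩, fun N ⟨hN, hTN⟩ => ?_⟩
  have hNM : N.disjSum M.toRight = M :=
    huniq _ ⟨isNClique_cliqueNum_addTwo_iff.2 (by simpa using ⟨hN, hMR⟩),
      subset_disjSum.2 ⟨hTN, toRight_subset_toRight hTM⟩⟩
  rw [← hNM, toLeft_disjSum]

lemma SimpleGraph.IsForcingSet.toRight_nonempty_of_addTwo {T : Finset (V ⊕ Fin 2)}
    (hT : (addTwo G).IsForcingSet T) : T.toRight.Nonempty := by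
  rw [nonempty_iff_ne_empty]
  intro hR
  obtain ⟨M, ⟨hM, hTM⟩, huniq⟩ := hT
  have hML := (isNClique_cliqueNum_addTwo_iff.1 hM).1
  have hswap (i : Fin 2) : M.toLeft.disjSum {i} = M :=
    huniq _ ⟨isNClique_cliqueNum_addTwo_disjSum_iff.2 hML,
      subset_disjSum.2 ⟨toLeft_subset_toLeft hTM, by simp [hR]⟩⟩
  simpa using (hswap 0).trans (hswap 1).symm

end addTwo

end

theorem stmt19 {V : Type*} [Fintype V] (G : SimpleGraph V) :
    Fomega (addTwo G) = Fomega G + 1 := by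
  apply le_antisymm
  · obtain ⟨S, hS, hcard⟩ := exists_isForcingSet_card_eq_Fomega G
    calc Fomega (addTwo G) ≤ #(S.disjSum {0}) := Fomega_le_card (hS.disjSum_addTwo 0)
      _ = Fomega G + 1 := by simp [hcard]
  · obtain ⟨T, hT, hcard⟩ := exists_isForcingSet_card_eq_Fomega (addTwo G)
    calc Fomega G + 1 ≤ #T.toLeft + #T.toRight :=
          add_le_add (Fomega_le_card hT.toLeft_of_addTwo) hT.toRight_nonempty_of_addTwo.card_pos
      _ = Fomega (addTwo G) := by rw [card_toLeft_add_card_toRight, hcard]
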